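/- arXiv:2205.01257 — 5 statements merged into one kernel-verified Lean document; each statement's English description precedes it below -/
import Mathlib

section
/- (Elliptical potential count lemma) Let d ≥ 1, T ≥ 1, let x_1, …, x_T ∈ ℝ^d be vectors with ‖x_t‖₂ ≤ 1 for all t ∈ [T], and let λ > 0. Define H_T = { t ∈ [T] : ‖x_t‖²_{V_{t-1}(λ)⁻¹} > 1 }. Then the cardinality of H_T satisfies |H_T| ≤ (2d / log 2) · log(1 + 1/(λ · log 2)). -/
open Matrix Finset Real

/-!
Let `W_t = λ I + ∑_{s ∈ H, s < t} x_s x_sᵀ` be the Gram matrix of the rounds of `H` only.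
Since `W_t ≤ V_{t-1}` in the Loewner order, every `t ∈ H` still has `‖x_t‖²_{W_t⁻¹} > 1`,
so by the matrix determinant lemma each round of `H` at least doubles the determinant:
`2^{|H|} λ^d ≤ det W`, where `W = λ I + ∑_{s ∈ H} x_s x_sᵀ`. On the other hand AM-GM on the
eigenvalues gives `det W ≤ (tr W / d)^d ≤ (λ + |H|/d)^d`. Taking logarithms,
`w = |H| log 2 / d` satisfies `w ≤ log (1 + w / (λ log 2))`, and such a `w` is at most
`2 log (1 + 1 / (λ log 2))`.
-/

theorem Real.prod_le_sum_div_card_pow {ι : Type*} (s : Finset ι) {z : ι → ℝ}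
    (hz : ∀ i ∈ s, 0 ≤ z i) : ∏ i ∈ s, z i ≤ ((∑ i ∈ s, z i) / #s) ^ #s := by
  rcases s.eq_empty_or_nonempty with rfl | hs
  · simp
  have hcard : (0 : ℝ) < #s := by exact_mod_cast hs.card_pos
  have amgm := Real.geom_mean_le_arith_mean s (fun _ ↦ 1) z (fun _ _ ↦ zero_le_one)
    (by simpa using hcard) hz
  simp only [Real.rpow_one, sum_const, nsmul_eq_mul, mul_one, one_mul] at amgm
  calc ∏ i ∈ s, z i = ((∏ i ∈ s, z i) ^ ((#s : ℝ)⁻¹)) ^ #s :=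
        (Real.rpow_inv_natCast_pow (prod_nonneg hz) hs.card_pos.ne').symm
    _ ≤ ((∑ i ∈ s, z i) / #s) ^ #s := by gcongr; exact Real.rpow_nonneg (prod_nonneg hz) _

theorem Matrix.det_add_vecMulVec {n α : Type*} [Fintype n] [DecidableEq n] [CommRing α]
    {A : Matrix n n α} (hA : IsUnit A.det) (u v : n → α) :
    (A + vecMulVec u v).det = A.det * (1 + v ⬝ᵥ A⁻¹ *ᵥ u) := by
  rw [vecMulVec_eq Unit, det_add_replicateCol_mul_replicateRow hA, Matrix.mul_assoc,
    ← replicateCol_mulVec, det_unique (n := Unit)]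
  simp [replicateRow_mul_replicateCol_apply]

namespace Matrix

variable {n ι : Type*} [Fintype n]

theorem posSemidef_sum_vecMulVec_self (x : ι → n → ℝ) (S : Finset ι) :
    (∑ s ∈ S, vecMulVec (x s) (x s)).PosSemidef :=
  posSemidef_sum S fun s _ ↦ by simpa using posSemidef_vecMulVec_self_star (x s)

variable [DecidableEq n]

theorem PosSemidef.det_le_trace_div_card_pow {A : Matrix n n ℝ} (hA : A.PosSemidef) :
    A.det ≤ (A.trace / Fintype.card n) ^ Fintype.card n := by
  rw [hA.isHermitian.det_eq_prod_eigenvalues, hA.isHermitian.trace_eq_sum_eigenvalues]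
  simpa using Real.prod_le_sum_div_card_pow univ fun i _ ↦ hA.eigenvalues_nonneg i

namespace PosDef

variable {A : Matrix n n ℝ}

theorem dotProduct_inv_add_mulVec_le (hA : A.PosDef) {P : Matrix n n ℝ} (hP : P.PosSemidef)
    (v : n → ℝ) : v ⬝ᵥ (A + P)⁻¹ *ᵥ v ≤ v ⬝ᵥ A⁻¹ *ᵥ v := by
  set z := (A + P)⁻¹ *ᵥ v
  set w := A⁻¹ *ᵥ v
  have hz : (A + P) *ᵥ z = v := by
    simp [z, mulVec_mulVec,
      mul_nonsing_inv _ ((isUnit_iff_isUnit_det _).mp (hA.add_posSemidef hP).isUnit)]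
  have hw : A *ᵥ w = v := by
    simp [w, mulVec_mulVec, mul_nonsing_inv _ ((isUnit_iff_isUnit_det _).mp hA.isUnit)]
  have hAt : Aᵀ = A := by simpa using hA.isHermitian.eq
  -- expand `0 ≤ (w - z)ᵀ A (w - z)` and use `zᵀ A z ≤ zᵀ (A + P) z = vᵀ z`
  have hdiff : 0 ≤ (w - z) ⬝ᵥ A *ᵥ (w - z) := by
    simpa using hA.posSemidef.dotProduct_mulVec_nonneg (w - z)
  have hPz : 0 ≤ z ⬝ᵥ P *ᵥ z := by simpa using hP.dotProduct_mulVec_nonneg z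
  have hwz : w ⬝ᵥ A *ᵥ z = z ⬝ᵥ v := by
    rw [dotProduct_mulVec, ← mulVec_transpose, hAt, hw, dotProduct_comm]
  have hzz : z ⬝ᵥ A *ᵥ z + z ⬝ᵥ P *ᵥ z = z ⬝ᵥ v := by
    rw [← dotProduct_add, ← add_mulVec, hz]
  simp only [mulVec_sub, sub_dotProduct, dotProduct_sub, hw, hwz] at hdiff
  rw [dotProduct_comm v z, dotProduct_comm v w]
  linarith

theorem dotProduct_inv_add_sum_vecMulVec_mulVec_le_of_subset [DecidableEq ι] (hA : A.PosDef)
    (x : ι → n → ℝ) {S S' : Finset ι} (hSS' : S ⊆ S') (v : n → ℝ) :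
    v ⬝ᵥ (A + ∑ s ∈ S', vecMulVec (x s) (x s))⁻¹ *ᵥ v
      ≤ v ⬝ᵥ (A + ∑ s ∈ S, vecMulVec (x s) (x s))⁻¹ *ᵥ v := by
  rw [← sum_sdiff hSS', add_comm (∑ s ∈ S' \ S, _), ← add_assoc]
  exact (hA.add_posSemidef (posSemidef_sum_vecMulVec_self x S)).dotProduct_inv_add_mulVec_le
    (posSemidef_sum_vecMulVec_self x _) v

theorem two_mul_det_le_det_add_vecMulVec (hA : A.PosDef) {v : n → ℝ}
    (hv : 1 < v ⬝ᵥ A⁻¹ *ᵥ v) : 2 * A.det ≤ (A + vecMulVec v v).det := by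
  rw [det_add_vecMulVec ((isUnit_iff_isUnit_det _).mp hA.isUnit)]
  nlinarith [hA.det_pos]

theorem two_pow_card_mul_det_le [LinearOrder ι] (hA : A.PosDef) (x : ι → n → ℝ)
    (S : Finset ι)
    (hS : ∀ t ∈ S,
      1 < x t ⬝ᵥ (A + ∑ s ∈ S with s < t, vecMulVec (x s) (x s))⁻¹ *ᵥ x t) :
    2 ^ #S * A.det ≤ (A + ∑ s ∈ S, vecMulVec (x s) (x s)).det := by
  induction S using Finset.induction_on_max with
  | empty => simp
  | insert a S hlt ih =>
    have ha : a ∉ S := fun h ↦ lt_irrefl a (hlt a h)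
    have hbefore : ∀ t ∈ S, {s ∈ insert a S | s < t} = {s ∈ S | s < t} := fun t ht ↦ by
      rw [filter_insert, if_neg (not_lt.mpr (hlt t ht).le)]
    have hbefore_a : {s ∈ insert a S | s < a} = S := by
      rw [filter_insert, if_neg (lt_irrefl a), filter_true_of_mem hlt]
    have ha_large := hS a (mem_insert_self a S)
    rw [hbefore_a] at ha_large
    calc 2 ^ #(insert a S) * A.det = 2 * (2 ^ #S * A.det) := by
          rw [card_insert_of_notMem ha]; ring
      _ ≤ 2 * (A + ∑ s ∈ S, vecMulVec (x s) (x s)).det := by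
          gcongr
          exact ih fun t ht ↦ hbefore t ht ▸ hS t (mem_insert_of_mem ht)
      _ ≤ (A + ∑ s ∈ insert a S, vecMulVec (x s) (x s)).det := by
          rw [sum_insert ha, add_comm (vecMulVec _ _), ← add_assoc]
          exact two_mul_det_le_det_add_vecMulVec
            (hA.add_posSemidef (posSemidef_sum_vecMulVec_self x S)) ha_large

end PosDef

theorem det_smul_one_add_sum_vecMulVec_le [Nonempty n] {lam : ℝ} (hlam : 0 ≤ lam)
    (x : ι → n → ℝ) (S : Finset ι) (hx : ∀ s ∈ S, x s ⬝ᵥ x s ≤ 1) :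
    (lam • (1 : Matrix n n ℝ) + ∑ s ∈ S, vecMulVec (x s) (x s)).det
      ≤ (lam + #S / Fintype.card n) ^ Fintype.card n := by
  have hpsd := (PosSemidef.one.smul hlam).add (posSemidef_sum_vecMulVec_self x S)
  refine hpsd.det_le_trace_div_card_pow.trans (pow_le_pow_left₀ ?_ ?_ _)
  · exact div_nonneg hpsd.trace_nonneg (Nat.cast_nonneg _)
  have hcard : (0 : ℝ) < Fintype.card n := by exact_mod_cast Fintype.card_pos
  have htrace : ∑ s ∈ S, x s ⬝ᵥ x s ≤ #S := by
    simpa using sum_le_sum hx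
  rw [trace_add, trace_smul, trace_one, trace_sum, div_le_iff₀ hcard, add_mul,
    div_mul_cancel₀ _ hcard.ne']
  simp only [trace_vecMulVec, smul_eq_mul]
  linarith

end Matrix

theorem Real.one_add_mul_exp_half_sub_one_lt_exp {w : ℝ} (hw : 0 < w) :
    1 + w * (exp (w / 2) - 1) < exp w := by
  have hs : 1 < exp (w / 2) := one_lt_exp_iff.mpr (by positivity)
  have hquad := quadratic_le_exp_of_nonneg (x := w / 2) (by positivity)
  have hsq : exp w = exp (w / 2) ^ 2 := by rw [← exp_nat_mul]; ring_nf
  -- `exp w - 1 - w (s - 1) = (s - 1)(s + 1 - w)` with `s = exp (w/2)`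
  nlinarith [sq_nonneg (w - 2)]

theorem Real.le_two_mul_log_one_add_of_le_log_one_add_mul {w c : ℝ} (hc : 0 ≤ c)
    (h : w ≤ log (1 + c * w)) : w ≤ 2 * log (1 + c) := by
  by_contra! hlt
  have hw : 0 < w := (mul_nonneg zero_le_two (log_nonneg (by linarith))).trans_lt hlt
  have hc' : 1 + c < exp (w / 2) := by
    rw [← log_lt_iff_lt_exp (by linarith)]; linarith
  have hexp : 1 + c * w < exp w := by nlinarith [one_add_mul_exp_half_sub_one_lt_exp hw]
  have hlog := (log_lt_iff_lt_exp (by positivity)).mpr hexp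
  linarith

theorem Real.natCast_le_of_two_pow_mul_le {N d : ℕ} (hd : 0 < d) {lam : ℝ} (hlam : 0 < lam)
    (h : 2 ^ N * lam ^ d ≤ (lam + N / d) ^ d) :
    (N : ℝ) ≤ 2 * d / log 2 * log (1 + 1 / (lam * log 2)) := by
  have hd' : (0 : ℝ) < d := by exact_mod_cast hd
  have hlog2 : 0 < log 2 := log_pos one_lt_two
  have hfactor : lam + N / d = lam * (1 + 1 / (lam * log 2) * (N * log 2 / d)) := by
    field_simp
  rw [hfactor, mul_pow, mul_comm, mul_le_mul_iff_right₀ (by positivity)] at h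
  have hlog := log_le_log (by positivity) h
  rw [log_pow, log_pow, ← div_le_iff₀' hd'] at hlog
  have hw := le_two_mul_log_one_add_of_le_log_one_add_mul (by positivity) hlog
  rw [div_le_iff₀ hd'] at hw
  rw [div_mul_eq_mul_div, le_div_iff₀ hlog2]
  linarith

theorem elliptical_potential_count_general (d T : ℕ) (hd : 1 ≤ d)
    (x : ℕ → Fin d → ℝ)
    (hx : ∀ t ∈ Finset.Icc 1 T, Real.sqrt (∑ i, (x t i) ^ 2) ≤ 1)
    (lam : ℝ) (hlam : 0 < lam)
    (V : ℕ → Matrix (Fin d) (Fin d) ℝ)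
    (hV : ∀ k, V k = lam • (1 : Matrix (Fin d) (Fin d) ℝ)
        + ∑ s ∈ Finset.Icc 1 k, Matrix.vecMulVec (x s) (x s))
    (H : Finset ℕ)
    (hH : ∀ t, t ∈ H ↔ t ∈ Finset.Icc 1 T ∧ 1 < x t ⬝ᵥ (V (t - 1))⁻¹ *ᵥ x t) :
    (H.card : ℝ) ≤ (2 * d / Real.log 2) * Real.log (1 + 1 / (lam * Real.log 2)) := by
  have hI : (lam • (1 : Matrix (Fin d) (Fin d) ℝ)).PosDef := PosDef.one.smul hlam
  have hHT : H ⊆ Icc 1 T := fun t ht ↦ ((hH t).1 ht).1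
  have hexceed : ∀ t ∈ H,
      1 < x t ⬝ᵥ (lam • 1 + ∑ s ∈ H with s < t, vecMulVec (x s) (x s))⁻¹ *ᵥ x t := by
    intro t ht
    refine ((hH t).1 ht).2.trans_le ?_
    rw [hV]
    refine hI.dotProduct_inv_add_sum_vecMulVec_mulVec_le_of_subset x (fun s hs ↦ ?_) _
    obtain ⟨hsH, hst⟩ := mem_filter.1 hs
    exact mem_Icc.2 ⟨(mem_Icc.1 (hHT hsH)).1, by omega⟩
  have hnorm : ∀ s ∈ H, x s ⬝ᵥ x s ≤ 1 := fun s hs ↦ by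
    simpa [dotProduct, sq] using hx s (hHT hs)
  have : Nonempty (Fin d) := ⟨⟨0, hd⟩⟩
  have hlower := hI.two_pow_card_mul_det_le x H hexceed
  have hupper := det_smul_one_add_sum_vecMulVec_le hlam.le x H hnorm
  rw [det_smul, det_one, mul_one, Fintype.card_fin] at hlower
  rw [Fintype.card_fin] at hupper
  exact Real.natCast_le_of_two_pow_mul_le hd hlam (hlower.trans hupper)

/-- Elliptical potential count lemma. -/
theorem elliptical_potential_count (d T : ℕ) (hd : 1 ≤ d) (hT : 1 ≤ T)
    (x : ℕ → Fin d → ℝ)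
    (hx : ∀ t ∈ Finset.Icc 1 T, Real.sqrt (∑ i, (x t i) ^ 2) ≤ 1)
    (lam : ℝ) (hlam : 0 < lam)
    (V : ℕ → Matrix (Fin d) (Fin d) ℝ)
    (hV : ∀ k, V k = lam • (1 : Matrix (Fin d) (Fin d) ℝ)
        + ∑ s ∈ Finset.Icc 1 k, Matrix.vecMulVec (x s) (x s))
    (H : Finset ℕ)
    (hH : ∀ t, t ∈ H ↔ t ∈ Finset.Icc 1 T ∧ 1 < x t ⬝ᵥ (V (t - 1))⁻¹ *ᵥ x t) :
    (H.card : ℝ) ≤ (2 * d / Real.log 2) * Real.log (1 + 1 / (lam * Real.log 2)) :=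
  elliptical_potential_count_general d T hd x hx lam hlam V hV H hH
end

section
/- Let X > 0, A > 0, B ≥ 0 be real numbers. If X ≤ A · log(1 + B·X), then for every η ∈ (0,1), X ≤ (1/(1-η)) · A · log( (A/(2η)) · (1/X + B) ). -/
theorem solve_implicit_log_ineq (X A B : ℝ) (hX : 0 < X) (hA : 0 < A) (hB : 0 ≤ B)
    (h : X ≤ A * Real.log (1 + B * X)) :
    ∀ η : ℝ, η ∈ Set.Ioo (0 : ℝ) 1 →
      X ≤ (1 / (1 - η)) * A * Real.log ((A / (2 * η)) * (1 / X + B)) := by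
  rintro η ⟨hη0, hη1⟩
  have hXB : (0:ℝ) < 1/X + B := by positivity
  have h1 : (1:ℝ) + B * X = X * (1/X + B) := by field_simp
  have hlog2 : Real.log (2*η*X/A) ≤ η*X/A := by
    calc Real.log (2*η*X/A) = Real.log (η*X/A) + Real.log 2 := by
          rw [← Real.log_mul (by positivity) (by norm_num)]; ring_nf
      _ ≤ (η*X/A - 1) + Real.log 2 := by
          have := Real.log_le_sub_one_of_pos (x := η*X/A) (by positivity)
          linarith
      _ ≤ η*X/A := by
          have := Real.log_two_lt_d9; linarith
  have hlogX : Real.log X ≤ η*X/A + Real.log (A/(2*η)) := by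
    have hx : Real.log X = Real.log (2*η*X/A) + Real.log (A/(2*η)) := by
      rw [← Real.log_mul (by positivity) (by positivity)]
      congr 1; field_simp
    linarith
  have hsplit : Real.log (1 + B*X) = Real.log X + Real.log (1/X+B) := by
    rw [h1, Real.log_mul hX.ne' hXB.ne']
  have hcomb : Real.log (A/(2*η)) + Real.log (1/X+B)
      = Real.log ((A/(2*η))*(1/X+B)) := by
    rw [← Real.log_mul (by positivity) hXB.ne']
  have hmul := mul_le_mul_of_nonneg_left hlogX hA.le
  have key : X ≤ η*X + A * Real.log ((A/(2*η))*(1/X+B)) := by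
    rw [hsplit] at h
    have hAe : A * (η*X/A) = η*X := by field_simp
    nlinarith [hmul, h, hcomb]
  have h1η : 0 < 1 - η := by linarith
  rw [div_mul_eq_mul_div, one_mul, div_mul_eq_mul_div, le_div_iff₀ h1η]
  nlinarith [key]
end

section
/- Let d ≥ 1, T ≥ 1, let x_1, …, x_T ∈ ℝ^d, let λ > 0, and let H ⊆ [T] be a set of indices such that xₖᵀ V_{k-1}(λ)⁻¹ xₖ ≥ 1 for every k ∈ H. Then det( λ I_d + Σ_{k∈H} x_k x_kᵀ ) ≥ λ^d · 2^{|H|}. -/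
/-!
Adding the rank-one term `u uᵀ` to a positive definite `W` multiplies the determinant by
`1 + uᵀ W⁻¹ u` (matrix determinant lemma), which is at least `2` when `uᵀ W⁻¹ u ≥ 1`. Add the
`x_k`, `k ∈ H`, in increasing order of `k`. When `x_k` is added, the current matrix is
`λ I + Σ_{j ∈ H, j < k} x_j x_jᵀ ≤ V_{k-1}(λ)` in the Loewner order, and `M ↦ vᵀ M⁻¹ v` is
antitone on positive definite matrices, so the hypothesis at `V_{k-1}(λ)` transfers to the
current matrix and each step at least doubles the determinant, starting from `det (λ I) = λ^d`.
-/

open Matrix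

namespace Matrix

variable {n : Type*} [Fintype n] [DecidableEq n]

theorem det_add_vecMulVec_s5 {W : Matrix n n ℝ} (hW : IsUnit W.det) (u v : n → ℝ) :
    (W + vecMulVec u v).det = W.det * (1 + v ⬝ᵥ W⁻¹ *ᵥ u) := by
  rw [vecMulVec_eq Unit, det_add_replicateCol_mul_replicateRow hW]
  congr 1
  rw [det_unique, add_apply, one_apply_eq, Matrix.mul_assoc, ← replicateCol_mulVec,
    replicateRow_mul_replicateCol_apply]

theorem PosDef.two_mul_det_le_det_add_vecMulVec_s5 {W : Matrix n n ℝ} (hW : W.PosDef) {u : n → ℝ}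
    (hu : 1 ≤ u ⬝ᵥ W⁻¹ *ᵥ u) : 2 * W.det ≤ (W + vecMulVec u u).det := by
  rw [det_add_vecMulVec_s5 hW.det_pos.ne'.isUnit]
  nlinarith [hW.det_pos]

/-- Variational form of the inverse quadratic form, attained at `y = B⁻¹ v`. -/
theorem PosDef.two_mul_dotProduct_sub_le {B : Matrix n n ℝ} (hB : B.PosDef) (y v : n → ℝ) :
    2 * (y ⬝ᵥ v) - y ⬝ᵥ B *ᵥ y ≤ v ⬝ᵥ B⁻¹ *ᵥ v := by
  set z := B⁻¹ *ᵥ v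
  have hBz : B *ᵥ z = v := by simp [z, mulVec_mulVec, mul_nonsing_inv B hB.det_pos.ne'.isUnit]
  have hBt : Bᵀ = B := hB.isHermitian.eq
  have hsq : 0 ≤ (y - z) ⬝ᵥ B *ᵥ (y - z) := by
    simpa using hB.posSemidef.dotProduct_mulVec_nonneg (y - z)
  have hsymm : z ⬝ᵥ B *ᵥ y = y ⬝ᵥ v := by
    rw [dotProduct_mulVec, ← mulVec_transpose, hBt, dotProduct_comm, hBz]
  simp only [mulVec_sub, sub_dotProduct, dotProduct_sub, hBz, hsymm] at hsq
  simp only [z, dotProduct_comm (B⁻¹ *ᵥ v) v] at hsq ⊢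
  linarith

theorem PosDef.dotProduct_inv_mulVec_antitone {A B : Matrix n n ℝ} (hA : A.PosDef)
    (hAB : (B - A).PosSemidef) (v : n → ℝ) : v ⬝ᵥ B⁻¹ *ᵥ v ≤ v ⬝ᵥ A⁻¹ *ᵥ v := by
  have hB : B.PosDef := sub_add_cancel B A ▸ hA.posSemidef_add hAB
  set y := B⁻¹ *ᵥ v
  have hBy : y ⬝ᵥ B *ᵥ y = v ⬝ᵥ y := by
    simp [y, mulVec_mulVec, mul_nonsing_inv B hB.det_pos.ne'.isUnit, dotProduct_comm]
  have hquad : y ⬝ᵥ A *ᵥ y ≤ y ⬝ᵥ B *ᵥ y := by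
    have := hAB.dotProduct_mulVec_nonneg y
    simp only [star_trivial, sub_mulVec, dotProduct_sub] at this
    linarith
  have := hA.two_mul_dotProduct_sub_le y v
  rw [dotProduct_comm y v] at this
  linarith

end Matrix

section DesignMatrix

variable {ι n : Type*}

/-- `V_t(λ)` is `designMatrix (λ • 1) x (Finset.Icc 1 t)`. -/
def designMatrix (A : Matrix n n ℝ) (x : ι → n → ℝ) (s : Finset ι) : Matrix n n ℝ :=
  A + ∑ j ∈ s, vecMulVec (x j) (x j)

variable {A : Matrix n n ℝ} {x : ι → n → ℝ}

theorem designMatrix_insert [DecidableEq ι] {s : Finset ι} {a : ι} (ha : a ∉ s) :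
    designMatrix A x (insert a s) = designMatrix A x s + vecMulVec (x a) (x a) := by
  rw [designMatrix, designMatrix, Finset.sum_insert ha, add_comm (vecMulVec _ _), add_assoc]

theorem posSemidef_designMatrix_sub_designMatrix [Fintype n] [DecidableEq ι] {s t : Finset ι}
    (h : s ⊆ t) : (designMatrix A x t - designMatrix A x s).PosSemidef := by
  rw [designMatrix, designMatrix, ← Finset.sum_sdiff h, add_sub_add_left_eq_sub,
    add_sub_cancel_right]
  exact posSemidef_sum _ fun j _ => by simpa using posSemidef_vecMulVec_self_star (x j)

theorem posDef_designMatrix [Fintype n] (hA : A.PosDef) (s : Finset ι) :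
    (designMatrix A x s).PosDef :=
  hA.add_posSemidef <| posSemidef_sum _ fun j _ => by
    simpa using posSemidef_vecMulVec_self_star (x j)

theorem det_mul_two_pow_card_le_det_designMatrix [Fintype n] [DecidableEq n] [LinearOrder ι]
    (hA : A.PosDef) {H : Finset ι} (S : ι → Finset ι) (hS : ∀ k ∈ H, ∀ j ∈ H, j < k → j ∈ S k)
    (hH : ∀ k ∈ H, 1 ≤ x k ⬝ᵥ (designMatrix A x (S k))⁻¹ *ᵥ x k) :
    A.det * 2 ^ H.card ≤ (designMatrix A x H).det := by
  induction H using Finset.induction_on_max with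
  | empty => simp [designMatrix]
  | insert a s hlt ih =>
    have ha : a ∉ s := fun h => lt_irrefl a (hlt a h)
    have hsub : s ⊆ S a := fun j hj =>
      hS a (s.mem_insert_self a) j (s.mem_insert_of_mem hj) (hlt j hj)
    have hquad : 1 ≤ x a ⬝ᵥ (designMatrix A x s)⁻¹ *ᵥ x a :=
      (hH a (s.mem_insert_self a)).trans <|
        (posDef_designMatrix hA s).dotProduct_inv_mulVec_antitone
          (posSemidef_designMatrix_sub_designMatrix hsub) _
    have hs := ih (fun k hk j hj => hS k (s.mem_insert_of_mem hk) j (s.mem_insert_of_mem hj))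
      (fun k hk => hH k (s.mem_insert_of_mem hk))
    rw [designMatrix_insert ha, Finset.card_insert_of_notMem ha, pow_succ]
    calc A.det * (2 ^ s.card * 2) = 2 * (A.det * 2 ^ s.card) := by ring
      _ ≤ 2 * (designMatrix A x s).det := by linarith
      _ ≤ _ := (posDef_designMatrix hA s).two_mul_det_le_det_add_vecMulVec_s5 hquad

end DesignMatrix

theorem det_lower_bound_general (d T : ℕ)
    (x : ℕ → Fin d → ℝ)
    (lam : ℝ) (hlam : 0 < lam)
    (V : ℕ → Matrix (Fin d) (Fin d) ℝ)
    (hV : ∀ k, V k = lam • (1 : Matrix (Fin d) (Fin d) ℝ)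
        + ∑ s ∈ Finset.Icc 1 k, Matrix.vecMulVec (x s) (x s))
    (H : Finset ℕ) (hHT : H ⊆ Finset.Icc 1 T)
    (hH : ∀ k ∈ H, 1 ≤ x k ⬝ᵥ (V (k - 1))⁻¹ *ᵥ x k) :
    lam ^ d * 2 ^ H.card
      ≤ (lam • (1 : Matrix (Fin d) (Fin d) ℝ)
          + ∑ k ∈ H, Matrix.vecMulVec (x k) (x k)).det := by
  have hpast : ∀ k ∈ H, ∀ j ∈ H, j < k → j ∈ Finset.Icc 1 (k - 1) := fun k _ j hj hjk =>
    Finset.mem_Icc.2 ⟨(Finset.mem_Icc.1 (hHT hj)).1, by omega⟩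
  have hV' : ∀ k, V k = designMatrix (lam • 1) x (Finset.Icc 1 k) := hV
  calc lam ^ d * 2 ^ H.card = (lam • (1 : Matrix (Fin d) (Fin d) ℝ)).det * 2 ^ H.card := by
        simp
    _ ≤ _ := det_mul_two_pow_card_le_det_designMatrix (PosDef.one.smul hlam) _ hpast
        (fun k hk => hV' (k - 1) ▸ hH k hk)

/-- Lower determinant bound used in the elliptical potential count lemma. -/
theorem det_lower_bound (d T : ℕ) (hd : 1 ≤ d) (hT : 1 ≤ T)
    (x : ℕ → Fin d → ℝ)
    (lam : ℝ) (hlam : 0 < lam)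
    (V : ℕ → Matrix (Fin d) (Fin d) ℝ)
    (hV : ∀ k, V k = lam • (1 : Matrix (Fin d) (Fin d) ℝ)
        + ∑ s ∈ Finset.Icc 1 k, Matrix.vecMulVec (x s) (x s))
    (H : Finset ℕ) (hHT : H ⊆ Finset.Icc 1 T)
    (hH : ∀ k ∈ H, 1 ≤ x k ⬝ᵥ (V (k - 1))⁻¹ *ᵥ x k) :
    lam ^ d * 2 ^ H.card
      ≤ (lam • (1 : Matrix (Fin d) (Fin d) ℝ)
          + ∑ k ∈ H, Matrix.vecMulVec (x k) (x k)).det :=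
  det_lower_bound_general d T x lam hlam V hV H hHT hH
end

section
/- Let h ≥ 0, d ≥ 1, λ > 0 be real numbers. If h ≤ (d / log 2) · log( 1 + h/(λ·d) ), then h ≤ (2d / log 2) · log( 1 + 1/(λ · log 2) ). -/
/-!
With `t = h log 2 / (2d)` and `c = 1 / (λ log 2)` the hypothesis reads `exp (2t) ≤ 1 + 2tc`.
Factor `exp (2t) - 1 = (exp t - 1)(exp t + 1)` and use `2t ≤ exp t + 1`: then
`(exp t - 1)(exp t + 1) ≤ (exp t + 1) c`, so `exp t ≤ 1 + c`, i.e. `t ≤ log (1 + c)`.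
-/

open Real

lemma two_mul_le_exp_add_one (t : ℝ) : 2 * t ≤ exp t + 1 := by
  rcases le_or_gt t 0 with ht | ht
  · linarith [exp_pos t]
  · nlinarith [quadratic_le_exp_of_nonneg ht.le, sq_nonneg (t - 1)]

lemma exp_le_one_add_of_exp_two_mul_le {t c : ℝ} (hc : 0 ≤ c)
    (H : exp (2 * t) ≤ 1 + 2 * t * c) : exp t ≤ 1 + c := by
  have hsq : exp (2 * t) = exp t * exp t := by rw [two_mul, exp_add]
  have hpos : 0 < exp t + 1 := by linarith [exp_pos t]
  have hfac : (exp t - 1) * (exp t + 1) ≤ c * (exp t + 1) := by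
    nlinarith [mul_le_mul_of_nonneg_left (two_mul_le_exp_add_one t) hc]
  linarith [le_of_mul_le_mul_right hfac hpos]

lemma le_log_one_add_of_two_mul_le_log {t c : ℝ} (ht : 0 ≤ t) (hc : 0 ≤ c)
    (H : 2 * t ≤ log (1 + 2 * t * c)) : t ≤ log (1 + c) := by
  rw [le_log_iff_exp_le (by positivity)]
  rw [le_log_iff_exp_le (by positivity)] at H
  exact exp_le_one_add_of_exp_two_mul_le hc H

theorem solve_elliptical_count_ineq (h d lam : ℝ) (hh : 0 ≤ h) (hd : 1 ≤ d) (hlam : 0 < lam)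
    (hyp : h ≤ (d / Real.log 2) * Real.log (1 + h / (lam * d))) :
    h ≤ (2 * d / Real.log 2) * Real.log (1 + 1 / (lam * Real.log 2)) := by
  have hL : 0 < log 2 := log_pos one_lt_two
  have hd0 : 0 < d := by linarith
  set t := h * log 2 / (2 * d) with ht
  set c := 1 / (lam * log 2) with hc
  have hhyp : 2 * t ≤ log (1 + 2 * t * c) := by
    rw [show 2 * t * c = h / (lam * d) by rw [ht, hc]; field_simp,
      show 2 * t = h / (d / log 2) by rw [ht]; field_simp, div_le_iff₀ (by positivity)]
    linarith
  calc h = 2 * d / log 2 * t := by rw [ht]; field_simp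
    _ ≤ 2 * d / log 2 * log (1 + c) := by
      gcongr
      exact le_log_one_add_of_two_mul_le_log (by positivity) (by positivity) hhyp
end

section
/- Let τ > 0, d > 0, K ≥ 0 and 0 < ω ≤ 2d be real numbers. If (τ − ω) · log 2 ≤ K + d · log(τ/ω), then τ ≤ ( 2·log 2 / (2·log 2 − 1) ) · ( K/log 2 + (d/log 2) · log(2d/ω) + 2d ). -/
theorem solve_warmup_length_ineq (τ d K ω : ℝ) (hτ : 0 < τ) (hd : 0 < d) (hK : 0 ≤ K)
    (hω : 0 < ω) (hω2 : ω ≤ 2 * d)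
    (h : (τ - ω) * Real.log 2 ≤ K + d * Real.log (τ / ω)) :
    τ ≤ (2 * Real.log 2 / (2 * Real.log 2 - 1)) *
      (K / Real.log 2 + (d / Real.log 2) * Real.log (2 * d / ω) + 2 * d) := by
  set L := Real.log 2 with hLdef
  have hL : (0.6931471803 : ℝ) < L := Real.log_two_gt_d9
  have hd2 : (0:ℝ) < 2 * d := by linarith
  have hsplit : Real.log (τ / ω) = Real.log (τ / (2 * d)) + Real.log (2 * d / ω) := by
    rw [Real.log_div hτ.ne' hω.ne', Real.log_div hτ.ne' hd2.ne',
      Real.log_div hd2.ne' hω.ne']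
    ring
  have hlog : Real.log (τ / (2 * d)) ≤ τ / (2 * d) - 1 :=
    Real.log_le_sub_one_of_pos (div_pos hτ hd2)
  have hA : 0 ≤ Real.log (2 * d / ω) :=
    Real.log_nonneg ((one_le_div hω).mpr hω2)
  set A := Real.log (2 * d / ω)
  have h1 : (τ - ω) * L ≤ K + d * (τ / (2 * d) - 1) + d * A := by
    rw [hsplit] at h; nlinarith [hlog, hd.le]
  have h2 : d * (τ / (2 * d)) = τ / 2 := by field_simp
  have h3 : τ * (2 * L - 1) ≤ 2 * (K + d * A + 2 * d * L) := by
    have hωL : ω * L ≤ 2 * d * L := by nlinarith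
    nlinarith [h1, h2]
  have hL1 : (0:ℝ) < 2 * L - 1 := by linarith
  have hLpos : (0:ℝ) < L := by linarith
  rw [div_mul_eq_mul_div, le_div_iff₀ hL1]
  have : K / L + d / L * A + 2 * d = (K + d * A + 2 * d * L) / L := by
    field_simp
  rw [this]
  have h4 : 2 * L * ((K + d * A + 2 * d * L) / L) = 2 * (K + d * A + 2 * d * L) := by
    field_simp
  rw [h4]; exact h3
end
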